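/- arXiv:1509.03189 — 2 statements merged into one kernel-verified Lean document; each statement's English description precedes it below -/
import Mathlib

section
/- Let a and b be pmp actions of a countable group G on probability spaces. Then a ≺ b if and only if for every finite measurable partition α of X_a, every finite subset F ⊆ G containing the identity, and every δ > 0, there exists an (α, F, δ)-homomorphism from a to b. -/
open MeasureTheory Filter Topology
open scoped ENNReal symmDiff



/-! Probability-measure-preserving actions, partitions, and weak containment. -/

/-- `a` is a probability-measure-preserving (pmp) action of the group `G` on the
measure space `(X, μ)`. -/
def IsPMP {G : Type*} [Group G] {X : Type*} [MeasurableSpace X]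
    (μ : Measure X) (a : G → X → X) : Prop :=
  (∀ g : G, MeasurePreserving (a g) μ μ) ∧ (∀ x, a 1 x = x) ∧
    ∀ (g h : G) (x : X), a (g * h) x = a g (a h x)

/-- The translate `g · A` of a subset `A` under the action `a`. -/
def actSet {G X : Type*} (a : G → X → X) (g : G) (A : Set X) : Set X :=
  a g '' A

/-- An (exact) finite measurable partition of `X` with `k` atoms. -/
def IsPartition {X : Type*} [MeasurableSpace X] {k : ℕ} (P : Fin k → Set X) : Prop :=
  (∀ i, MeasurableSet (P i)) ∧ Pairwise (Function.onFun Disjoint P) ∧ ⋃ i, P i = Set.univ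

/-- `‖c(a,F,P) - c(b,F,Q)‖₁ = ∑_{i,j ≤ k} ∑_{f ∈ F} |μ(Pᵢ ∩ f·Pⱼ) - ν(Qᵢ ∩ f·Qⱼ)|`,
the `ℓ¹`-distance between the `F`-statistics of the two partitions. -/
noncomputable def statDist {G : Type*} {X Y : Type*} [MeasurableSpace X] [MeasurableSpace Y]
    (μ : Measure X) (a : G → X → X) (ν : Measure Y) (b : G → Y → Y)
    (F : Finset G) {k : ℕ} (P : Fin k → Set X) (Q : Fin k → Set Y) : ℝ :=
  ∑ i : Fin k, ∑ j : Fin k, ∑ f ∈ F,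
    |(μ (P i ∩ actSet a f (P j))).toReal - (ν (Q i ∩ actSet b f (Q j))).toReal|

/-- `d_{F,P}(a,b)`: the infimum over `k`-atom partitions `Q` of `X_b` of
`‖c(a,F,P) - c(b,F,Q)‖₁`. -/
noncomputable def dPart {G : Type*} {X Y : Type*} [MeasurableSpace X] [MeasurableSpace Y]
    (μ : Measure X) (a : G → X → X) (ν : Measure Y) (b : G → Y → Y)
    (F : Finset G) {k : ℕ} (P : Fin k → Set X) : ℝ :=
  sInf {r : ℝ | ∃ Q : Fin k → Set Y, IsPartition Q ∧ r = statDist μ a ν b F P Q}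

/-- `d_{F,k}(a,b)`: the supremum over `k`-atom partitions `P` of `X_a` of `d_{F,P}(a,b)`. -/
noncomputable def dNum {G : Type*} {X Y : Type*} [MeasurableSpace X] [MeasurableSpace Y]
    (μ : Measure X) (a : G → X → X) (ν : Measure Y) (b : G → Y → Y)
    (F : Finset G) (k : ℕ) : ℝ :=
  sSup {r : ℝ | ∃ P : Fin k → Set X, IsPartition P ∧ r = dPart μ a ν b F P}

/-- Weak containment `a ≺ b` of pmp actions: every finite partition of `X_a` and
every finite set of group elements can be `ε`-simulated by a partition of `X_b`. -/
def WC {G : Type*} {X Y : Type*} [MeasurableSpace X] [MeasurableSpace Y]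
    (μ : Measure X) (a : G → X → X) (ν : Measure Y) (b : G → Y → Y) : Prop :=
  ∀ ε : ℝ, 0 < ε → ∀ (F : Finset G) (k : ℕ) (P : Fin k → Set X), IsPartition P →
    ∃ Q : Fin k → Set Y, IsPartition Q ∧ statDist μ a ν b F P Q ≤ ε

/-- The measure `μ` is diffuse (atomless in the sense of measure algebras):
every non-null measurable set contains a measurable subset of strictly
intermediate measure. -/
def Diffuse {X : Type*} [MeasurableSpace X] (μ : Measure X) : Prop :=
  ∀ A : Set X, MeasurableSet A → μ A ≠ 0 →
    ∃ B : Set X, MeasurableSet B ∧ B ⊆ A ∧ 0 < μ B ∧ μ B < μ A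

/-- Diffuseness relative to a sub-σ-algebra `m`. -/
def DiffuseOn {X : Type*} (m : MeasurableSpace X) {m0 : MeasurableSpace X}
    (μ : Measure X) : Prop :=
  ∀ A : Set X, MeasurableSet[m] A → μ A ≠ 0 →
    ∃ B : Set X, MeasurableSet[m] B ∧ B ⊆ A ∧ 0 < μ B ∧ μ B < μ A

/-!
Both directions compare the statistics `μ(A ∩ g · A')` of the atoms of the refinement `P_F`
with those of their images in `X_b`. If `a ≺ b`, simulate the whole partition `P_F` by a
partition of `X_b`. The images of the atoms lying in `P i` and in `f · P i` then have almost the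
statistics of `P i` and `f · P i`, and since `ν(s ∆ t) = ν s + ν t - 2 ν(t ∩ s)` this forces
`ν(f · φ(P i) ∆ φ(f · P i)) ≈ μ(f · P i ∆ f · P i) = 0`.

Conversely, given a homomorphism `φ` for `F ∪ {1}`, let `Q i = φ(P i)`, completed to a partition
by the uncovered set, which is small because `φ` almost preserves measure. Then
`P i ∩ f · P j` is a union of atoms whose image `φ(P i) ∩ φ(f · P j)` is close to
`Q i ∩ f · Q j` by almost-equivariance.
-/

open Function

theorem actSet_iUnion {G X : Type*} {ι : Sort*} (a : G → X → X) (g : G) (s : ι → Set X) :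
    actSet a g (⋃ i, s i) = ⋃ i, actSet a g (s i) :=
  Set.image_iUnion

namespace IsPMP

variable {G X : Type*} [Group G] [MeasurableSpace X] {μ : Measure X} {a : G → X → X}

theorem inv_apply_apply (h : IsPMP μ a) (g : G) (x : X) : a g⁻¹ (a g x) = x := by
  rw [← h.2.2, inv_mul_cancel, h.2.1]

theorem apply_inv_apply (h : IsPMP μ a) (g : G) (x : X) : a g (a g⁻¹ x) = x := by
  simpa using h.inv_apply_apply g⁻¹ x

theorem actSet_eq_preimage (h : IsPMP μ a) (g : G) (A : Set X) :
    actSet a g A = a g⁻¹ ⁻¹' A :=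
  congrFun (Set.image_eq_preimage_of_inverse (h.inv_apply_apply g) (h.apply_inv_apply g)) A

theorem measurableSet_actSet (h : IsPMP μ a) (g : G) {A : Set X} (hA : MeasurableSet A) :
    MeasurableSet (actSet a g A) := by
  rw [h.actSet_eq_preimage]
  exact (h.1 g⁻¹).measurable hA

theorem measureReal_actSet (h : IsPMP μ a) (g : G) {A : Set X} (hA : MeasurableSet A) :
    μ.real (actSet a g A) = μ.real A := by
  rw [h.actSet_eq_preimage]
  exact (h.1 g⁻¹).measureReal_preimage hA.nullMeasurableSet

theorem actSet_one (h : IsPMP μ a) (A : Set X) : actSet a 1 A = A := by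
  simp [actSet, h.2.1]

theorem actSet_univ (h : IsPMP μ a) (g : G) : actSet a g Set.univ = Set.univ := by
  rw [h.actSet_eq_preimage, Set.preimage_univ]

theorem disjoint_actSet (h : IsPMP μ a) (g : G) {A B : Set X} (hAB : Disjoint A B) :
    Disjoint (actSet a g A) (actSet a g B) := by
  rw [h.actSet_eq_preimage, h.actSet_eq_preimage]
  exact hAB.preimage _

theorem actSet_symmDiff (h : IsPMP μ a) (g : G) (A B : Set X) :
    actSet a g (A ∆ B) = actSet a g A ∆ actSet a g B := by
  simp only [h.actSet_eq_preimage, Set.preimage_symmDiff]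

end IsPMP

/-- The atoms of the partition `P_F` generated by the `F`-translates of `P`, indexed by
`σ : F → Fin k` (most of them empty). -/
def refineAtom {G X : Type*} (a : G → X → X) (F : Finset G) {k : ℕ} (P : Fin k → Set X)
    (σ : F → Fin k) : Set X :=
  ⋂ f : F, actSet a f (P (σ f))

def fiberUnion {ι κ α : Type*} (φ : ι → Set α) (π : ι → κ) (c : κ) : Set α :=
  ⋃ σ, ⋃ (_ : π σ = c), φ σ

section fiberUnion

variable {ι κ κ' α : Type*} {φ : ι → Set α}

theorem iUnion_fiberUnion (φ : ι → Set α) (π : ι → κ) : ⋃ c, fiberUnion φ π c = ⋃ σ, φ σ := by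
  ext x
  simp only [fiberUnion, Set.mem_iUnion, exists_prop]
  exact ⟨fun ⟨_, σ, _, hx⟩ => ⟨σ, hx⟩, fun ⟨σ, hx⟩ => ⟨π σ, σ, rfl, hx⟩⟩

theorem fiberUnion_eq_biUnion [Fintype ι] [DecidableEq κ] (φ : ι → Set α) (π : ι → κ) (c : κ) :
    fiberUnion φ π c = ⋃ σ ∈ Finset.univ.filter (π · = c), φ σ := by
  simp [fiberUnion]

theorem pairwise_disjoint_fiberUnion (hφ : Pairwise (Disjoint on φ)) (π : ι → κ) :
    Pairwise (Disjoint on fiberUnion φ π) := by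
  intro c c' hc
  simp only [onFun, fiberUnion, Set.disjoint_iUnion_left, Set.disjoint_iUnion_right]
  rintro σ rfl τ rfl
  exact hφ fun hστ => hc (hστ ▸ rfl)

theorem fiberUnion_inter_fiberUnion (hφ : Pairwise (Disjoint on φ)) (π : ι → κ) (π' : ι → κ')
    (c : κ) (c' : κ') :
    fiberUnion φ π c ∩ fiberUnion φ π' c' = fiberUnion φ (fun σ => (π σ, π' σ)) (c, c') := by
  ext x
  simp only [fiberUnion, Set.mem_inter_iff, Set.mem_iUnion, exists_prop, Prod.mk.injEq]
  constructor
  · rintro ⟨⟨σ, hσ, hx⟩, τ, hτ, hx'⟩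
    obtain rfl : σ = τ := by_contra fun hne => Set.disjoint_left.1 (hφ hne) hx hx'
    exact ⟨σ, ⟨hσ, hτ⟩, hx⟩
  · rintro ⟨σ, ⟨hσ, hσ'⟩, hx⟩
    exact ⟨⟨σ, hσ, hx⟩, σ, hσ', hx⟩

theorem measurableSet_fiberUnion [MeasurableSpace α] [Countable ι]
    (hφ : ∀ σ, MeasurableSet (φ σ)) (π : ι → κ) (c : κ) : MeasurableSet (fiberUnion φ π c) :=
  .iUnion fun σ => .iUnion fun _ => hφ σ

theorem actSet_fiberUnion {G : Type*} (a : G → α → α) (g : G) (φ : ι → Set α) (π : ι → κ)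
    (c : κ) : actSet a g (fiberUnion φ π c) = fiberUnion (fun σ => actSet a g (φ σ)) π c := by
  simp only [fiberUnion, actSet_iUnion]

end fiberUnion

section refineAtom

variable {G X : Type*} [Group G] [MeasurableSpace X] {μ : Measure X} {a : G → X → X}
  {F : Finset G} {k : ℕ} {P : Fin k → Set X}

theorem measurableSet_refineAtom (ha : IsPMP μ a) (hP : ∀ i, MeasurableSet (P i))
    (σ : F → Fin k) : MeasurableSet (refineAtom a F P σ) :=
  .iInter fun _ => ha.measurableSet_actSet _ (hP _)

theorem pairwise_disjoint_refineAtom (ha : IsPMP μ a) (hP : Pairwise (Disjoint on P)) :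
    Pairwise (Disjoint on refineAtom a F P) := by
  intro σ τ hne
  obtain ⟨f, hf⟩ := ne_iff.1 hne
  exact (ha.disjoint_actSet f (hP hf)).mono (Set.iInter_subset _ f) (Set.iInter_subset _ f)

theorem fiberUnion_refineAtom (ha : IsPMP μ a) (hP : ⋃ i, P i = Set.univ) (f : F) (i : Fin k) :
    fiberUnion (refineAtom a F P) (· f) i = actSet a f (P i) := by
  refine subset_antisymm (Set.iUnion₂_subset fun σ hσ => hσ ▸ Set.iInter_subset _ f) ?_
  intro x hx
  have hcover : ∀ f' : F, ∃ j, x ∈ actSet a f' (P j) := fun f' => by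
    have hx' : x ∈ actSet a f' (⋃ j, P j) := by rw [hP, ha.actSet_univ]; trivial
    rwa [actSet_iUnion, Set.mem_iUnion] at hx'
  choose j hj using hcover
  classical
  refine Set.mem_iUnion₂.2 ⟨update j f i, update_self .., Set.mem_iInter.2 fun f' => ?_⟩
  rcases eq_or_ne f' f with rfl | hf'
  · simpa using hx
  · simpa [update_of_ne hf'] using hj f'

theorem iUnion_refineAtom (ha : IsPMP μ a) (hP : ⋃ i, P i = Set.univ) (f : F) :
    ⋃ σ, refineAtom a F P σ = Set.univ := by
  rw [← iUnion_fiberUnion _ (· f)]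
  simp_rw [fiberUnion_refineAtom ha hP f]
  rw [← actSet_iUnion, hP, ha.actSet_univ]

end refineAtom

section measure

variable {ι κ X : Type*} [Fintype ι] [DecidableEq κ] [MeasurableSpace X] {μ : Measure X}
  [IsFiniteMeasure μ] {A : ι → Set X}

theorem measureReal_fiberUnion (hAm : ∀ σ, MeasurableSet (A σ)) (hAd : Pairwise (Disjoint on A))
    (π : ι → κ) (c : κ) :
    μ.real (fiberUnion A π c) = ∑ σ ∈ Finset.univ.filter (π · = c), μ.real (A σ) := by
  rw [fiberUnion_eq_biUnion]
  exact measureReal_biUnion_finset (fun σ _ τ _ h => hAd h) fun σ _ => hAm σ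

theorem abs_measureReal_fiberUnion_sub_le {Y : Type*} [MeasurableSpace Y] {ν : Measure Y}
    [IsFiniteMeasure ν] {B : ι → Set Y} (hAm : ∀ σ, MeasurableSet (A σ))
    (hAd : Pairwise (Disjoint on A)) (hBm : ∀ σ, MeasurableSet (B σ))
    (hBd : Pairwise (Disjoint on B)) (π : ι → κ) (c : κ) :
    |μ.real (fiberUnion A π c) - ν.real (fiberUnion B π c)| ≤
      ∑ σ ∈ Finset.univ.filter (π · = c), |μ.real (A σ) - ν.real (B σ)| := by
  rw [measureReal_fiberUnion hAm hAd, measureReal_fiberUnion hBm hBd, ← Finset.sum_sub_distrib]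
  exact Finset.abs_sum_le_sum_abs _ _

theorem measureReal_fiberUnion_inter_actSet {G : Type*} [Group G] {a : G → X → X}
    (ha : IsPMP μ a) (hAm : ∀ σ, MeasurableSet (A σ)) (hAd : Pairwise (Disjoint on A))
    (g : G) {κ' : Type*} [DecidableEq κ'] (π : ι → κ) (π' : ι → κ') (c : κ) (c' : κ') :
    μ.real (fiberUnion A π c ∩ actSet a g (fiberUnion A π' c')) =
      ∑ σ ∈ Finset.univ.filter (π · = c), ∑ τ ∈ Finset.univ.filter (π' · = c'),
        μ.real (A σ ∩ actSet a g (A τ)) := by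
  rw [actSet_fiberUnion, fiberUnion_eq_biUnion, fiberUnion_eq_biUnion, Set.iUnion₂_inter,
    measureReal_biUnion_finset]
  · refine Finset.sum_congr rfl fun σ _ => ?_
    rw [Set.inter_iUnion₂, measureReal_biUnion_finset]
    · exact fun τ _ τ' _ h => (ha.disjoint_actSet g (hAd h)).mono Set.inter_subset_right
        Set.inter_subset_right
    · exact fun τ _ => (hAm σ).inter (ha.measurableSet_actSet g (hAm τ))
  · exact fun σ _ σ' _ h => (hAd h).mono Set.inter_subset_left Set.inter_subset_left
  · exact fun σ _ => (hAm σ).inter (MeasurableSet.biUnion (Finset.countable_toSet _)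
      fun τ _ => ha.measurableSet_actSet g (hAm τ))

end measure

noncomputable def statDistAt {G X Y : Type*} [MeasurableSpace X] [MeasurableSpace Y]
    (μ : Measure X) (a : G → X → X) (ν : Measure Y) (b : G → Y → Y) (g : G) {ι : Type*}
    [Fintype ι] (A : ι → Set X) (B : ι → Set Y) : ℝ :=
  ∑ σ, ∑ τ, |μ.real (A σ ∩ actSet a g (A τ)) - ν.real (B σ ∩ actSet b g (B τ))|

section statDistAt

variable {G X Y ι : Type*} [MeasurableSpace X] [MeasurableSpace Y] {μ : Measure X}
  {a : G → X → X} {ν : Measure Y} {b : G → Y → Y} [Fintype ι]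

theorem statDist_eq_sum_statDistAt (F : Finset G) {k : ℕ} (P : Fin k → Set X)
    (Q : Fin k → Set Y) : statDist μ a ν b F P Q = ∑ f ∈ F, statDistAt μ a ν b f P Q := by
  simp only [statDist, statDistAt, measureReal_def]
  exact (Finset.sum_congr rfl fun _ _ => Finset.sum_comm).trans Finset.sum_comm

theorem statDistAt_nonneg (g : G) (A : ι → Set X) (B : ι → Set Y) :
    0 ≤ statDistAt μ a ν b g A B := by
  unfold statDistAt; positivity

theorem statDistAt_le_statDist {F : Finset G} {g : G} (hg : g ∈ F) {k : ℕ} (P : Fin k → Set X)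
    (Q : Fin k → Set Y) : statDistAt μ a ν b g P Q ≤ statDist μ a ν b F P Q := by
  rw [statDist_eq_sum_statDistAt]
  exact Finset.single_le_sum (fun f _ => statDistAt_nonneg f P Q) hg

theorem statDistAt_comp_equiv {κ : Type*} [Fintype κ] (e : κ ≃ ι) (g : G) (A : ι → Set X)
    (B : ι → Set Y) : statDistAt μ a ν b g (A ∘ e) (B ∘ e) = statDistAt μ a ν b g A B := by
  unfold statDistAt
  exact Fintype.sum_equiv e _ _ fun σ => Fintype.sum_equiv e _ _ fun τ => rfl

theorem WC.exists_statDistAt_le (h : WC μ a ν b) {A : ι → Set X}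
    (hAm : ∀ σ, MeasurableSet (A σ)) (hAd : Pairwise (Disjoint on A))
    (hAc : ⋃ σ, A σ = Set.univ) (F : Finset G) {ε : ℝ} (hε : 0 < ε) :
    ∃ B : ι → Set Y, (∀ σ, MeasurableSet (B σ)) ∧ Pairwise (Disjoint on B) ∧
      ∀ g ∈ F, statDistAt μ a ν b g A B ≤ ε := by
  let e := Fintype.equivFin ι
  have hP : IsPartition (A ∘ e.symm) :=
    ⟨fun _ => hAm _, fun _ _ hn => hAd (e.symm.injective.ne hn),
      (e.symm.surjective.iUnion_comp A).trans hAc⟩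
  obtain ⟨Q, hQ, hQε⟩ := h ε hε F _ (A ∘ e.symm) hP
  refine ⟨Q ∘ e, fun _ => hQ.1 _, fun _ _ h => hQ.2.1 (e.injective.ne h), fun g hg => ?_⟩
  calc statDistAt μ a ν b g A (Q ∘ e)
      = statDistAt μ a ν b g (A ∘ e.symm) Q := by
        rw [← statDistAt_comp_equiv e]; simp [comp_def]
    _ ≤ ε := (statDistAt_le_statDist hg _ _).trans hQε

theorem sum_abs_measureReal_sub_le_statDistAt_one [Group G] {A : ι → Set X} {B : ι → Set Y}
    (ha : IsPMP μ a) (hb : IsPMP ν b) :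
    ∑ σ, |ν.real (B σ) - μ.real (A σ)| ≤ statDistAt μ a ν b 1 A B := by
  refine Finset.sum_le_sum fun σ _ => ?_
  rw [abs_sub_comm]
  convert Finset.single_le_sum (f := fun τ => |μ.real (A σ ∩ actSet a 1 (A τ)) -
    ν.real (B σ ∩ actSet b 1 (B τ))|) (fun _ _ => abs_nonneg _) (Finset.mem_univ σ) using 1
  simp only [ha.actSet_one, hb.actSet_one, Set.inter_self]

end statDistAt

theorem measureReal_symmDiff_eq_add_sub {X : Type*} [MeasurableSpace X] {μ : Measure X}
    [IsFiniteMeasure μ] {s t : Set X} (hs : MeasurableSet s) (ht : MeasurableSet t) :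
    μ.real (s ∆ t) = μ.real s + μ.real t - 2 * μ.real (t ∩ s) := by
  have hs' : μ.real (s ∩ t) + μ.real (s \ t) = μ.real s := measureReal_inter_add_sdiff ht
  have ht' : μ.real (t ∩ s) + μ.real (t \ s) = μ.real t := measureReal_inter_add_sdiff hs
  rw [Set.inter_comm] at hs'
  rw [measureReal_symmDiff_eq hs ht]
  linarith

section statistics

variable {G X Y ι κ κ' : Type*} [Group G] [MeasurableSpace X] [MeasurableSpace Y]
  {μ : Measure X} [IsFiniteMeasure μ] {a : G → X → X} {ν : Measure Y} [IsFiniteMeasure ν]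
  {b : G → Y → Y} [Fintype ι] {A : ι → Set X} {B : ι → Set Y}
  [DecidableEq κ] [DecidableEq κ']

theorem abs_measureReal_fiberUnion_inter_actSet_sub_le (ha : IsPMP μ a) (hb : IsPMP ν b)
    (hAm : ∀ σ, MeasurableSet (A σ)) (hAd : Pairwise (Disjoint on A))
    (hBm : ∀ σ, MeasurableSet (B σ)) (hBd : Pairwise (Disjoint on B))
    (g : G) (π : ι → κ) (π' : ι → κ') (c : κ) (c' : κ') :
    |μ.real (fiberUnion A π c ∩ actSet a g (fiberUnion A π' c')) -
        ν.real (fiberUnion B π c ∩ actSet b g (fiberUnion B π' c'))| ≤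
      statDistAt μ a ν b g A B := by
  rw [measureReal_fiberUnion_inter_actSet ha hAm hAd,
    measureReal_fiberUnion_inter_actSet hb hBm hBd, ← Finset.sum_sub_distrib]
  refine (Finset.abs_sum_le_sum_abs _ _).trans ?_
  refine (Finset.sum_le_sum_of_subset_of_nonneg (Finset.filter_subset _ _)
    fun _ _ _ => abs_nonneg _).trans (Finset.sum_le_sum fun σ _ => ?_)
  rw [← Finset.sum_sub_distrib]
  exact (Finset.abs_sum_le_sum_abs _ _).trans (Finset.sum_le_sum_of_subset_of_nonneg
    (Finset.filter_subset _ _) fun _ _ _ => abs_nonneg _)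

theorem abs_measureReal_fiberUnion_sub_le_statDistAt (ha : IsPMP μ a) (hb : IsPMP ν b)
    (hAm : ∀ σ, MeasurableSet (A σ)) (hAd : Pairwise (Disjoint on A))
    (hBm : ∀ σ, MeasurableSet (B σ)) (hBd : Pairwise (Disjoint on B)) (π : ι → κ) (c : κ) :
    |μ.real (fiberUnion A π c) - ν.real (fiberUnion B π c)| ≤ statDistAt μ a ν b 1 A B := by
  simpa only [ha.actSet_one, hb.actSet_one, Set.inter_self] using
    abs_measureReal_fiberUnion_inter_actSet_sub_le ha hb hAm hAd hBm hBd 1 π π c c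

/-- Each term of `ν(s ∆ t) = ν s + ν t - 2 ν(t ∩ s)` is controlled by the statistics at `1` or
at `g`. -/
theorem measureReal_actSet_fiberUnion_symmDiff_le (ha : IsPMP μ a) (hb : IsPMP ν b)
    (hAm : ∀ σ, MeasurableSet (A σ)) (hAd : Pairwise (Disjoint on A))
    (hBm : ∀ σ, MeasurableSet (B σ)) (hBd : Pairwise (Disjoint on B))
    (g : G) (π : ι → κ) (π' : ι → κ') (c : κ) (c' : κ') :
    ν.real (actSet b g (fiberUnion B π c) ∆ fiberUnion B π' c') ≤
      μ.real (actSet a g (fiberUnion A π c) ∆ fiberUnion A π' c') +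
        2 * statDistAt μ a ν b 1 A B + 2 * statDistAt μ a ν b g A B := by
  rw [measureReal_symmDiff_eq_add_sub (hb.measurableSet_actSet g (measurableSet_fiberUnion hBm π c))
      (measurableSet_fiberUnion hBm π' c'),
    measureReal_symmDiff_eq_add_sub (ha.measurableSet_actSet g (measurableSet_fiberUnion hAm π c))
      (measurableSet_fiberUnion hAm π' c'),
    hb.measureReal_actSet g (measurableSet_fiberUnion hBm π c),
    ha.measureReal_actSet g (measurableSet_fiberUnion hAm π c)]
  have hU := abs_le.1 (abs_measureReal_fiberUnion_sub_le_statDistAt ha hb hAm hAd hBm hBd π c)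
  have hV := abs_le.1 (abs_measureReal_fiberUnion_sub_le_statDistAt ha hb hAm hAd hBm hBd π' c')
  have hUV := abs_le.1
    (abs_measureReal_fiberUnion_inter_actSet_sub_le ha hb hAm hAd hBm hBd g π' π c' c)
  linarith [hU.1, hV.1, hUV.2]

end statistics

/-- The `(P, F, δ)`-homomorphisms of the statement: `φ σ` is the image of the atom
`refineAtom a F P σ`, so that `fiberUnion φ (· f) i` is the image of `f · P i`. -/
def IsApproxHom {G X Y : Type*} [Group G] [MeasurableSpace X] [MeasurableSpace Y]
    (μ : Measure X) (a : G → X → X) (ν : Measure Y) (b : G → Y → Y) {k : ℕ}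
    (P : Fin k → Set X) (F : Finset G) (h1 : (1 : G) ∈ F) (δ : ℝ) (φ : (F → Fin k) → Set Y) :
    Prop :=
  (∀ σ, MeasurableSet (φ σ)) ∧ Pairwise (Disjoint on φ) ∧
    (∀ (f : F) (i : Fin k),
      ν.real (actSet b f (fiberUnion φ (· ⟨1, h1⟩) i) ∆ fiberUnion φ (· f) i) < δ) ∧
    ∑' σ, |ν.real (φ σ) - μ.real (refineAtom a F P σ)| < δ

section homomorphism

variable {G X Y : Type*} [Group G] [MeasurableSpace X] [MeasurableSpace Y]
  {μ : Measure X} {a : G → X → X} {ν : Measure Y} {b : G → Y → Y}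
  {k : ℕ} {P : Fin k → Set X} {F : Finset G} {δ : ℝ}

theorem WC.exists_isApproxHom [IsFiniteMeasure μ] [IsFiniteMeasure ν] (h : WC μ a ν b)
    (ha : IsPMP μ a) (hb : IsPMP ν b) (hP : IsPartition P) (h1 : (1 : G) ∈ F) (hδ : 0 < δ) :
    ∃ φ, IsApproxHom μ a ν b P F h1 δ φ := by
  classical
  have hAm := measurableSet_refineAtom (F := F) ha hP.1
  have hAd := pairwise_disjoint_refineAtom (F := F) ha hP.2.1
  obtain ⟨φ, hφm, hφd, hφ⟩ := h.exists_statDistAt_le hAm hAd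
    (iUnion_refineAtom ha hP.2.2 ⟨1, h1⟩) F (ε := δ / 5) (by positivity)
  refine ⟨φ, hφm, hφd, fun f i => ?_, ?_⟩
  · have hA : actSet a f (fiberUnion (refineAtom a F P) (· ⟨1, h1⟩) i) ∆
        fiberUnion (refineAtom a F P) (· f) i = ∅ := by
      rw [fiberUnion_refineAtom ha hP.2.2, fiberUnion_refineAtom ha hP.2.2, ha.actSet_one,
        symmDiff_self, Set.bot_eq_empty]
    have hB := measureReal_actSet_fiberUnion_symmDiff_le ha hb hAm hAd hφm hφd (f : G)
      (· ⟨1, h1⟩) (· f) i i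
    rw [hA, measureReal_empty] at hB
    linarith [hφ 1 h1, hφ f f.2]
  · rw [tsum_fintype]
    linarith [sum_abs_measureReal_sub_le_statDistAt_one ha hb (A := refineAtom a F P) (B := φ),
      hφ 1 h1]

end homomorphism

theorem exists_isPartition_symmDiff_subset {Y : Type*} [MeasurableSpace Y] {k : ℕ} (i₀ : Fin k)
    {S : Fin k → Set Y} (hSm : ∀ i, MeasurableSet (S i)) (hSd : Pairwise (Disjoint on S)) :
    ∃ Q : Fin k → Set Y, IsPartition Q ∧ ∀ i, S i ∆ Q i ⊆ (⋃ j, S j)ᶜ := by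
  have hR (j : Fin k) : Disjoint (⋃ j, S j)ᶜ (S j) :=
    disjoint_compl_left.mono_right (Set.subset_iUnion S j)
  refine ⟨update S i₀ (S i₀ ∪ (⋃ j, S j)ᶜ), ⟨fun i => ?_, fun i j hij => ?_, ?_⟩, fun i => ?_⟩
  · rcases eq_or_ne i i₀ with rfl | hi
    · simpa using (hSm i).union (MeasurableSet.iUnion hSm).compl
    · simpa [update_of_ne hi] using hSm i
  · rcases eq_or_ne i i₀ with rfl | hi
    · simpa [update_of_ne hij.symm, onFun] using (hSd hij).union_left (hR j)
    rcases eq_or_ne j i₀ with rfl | hj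
    · simpa [update_of_ne hi, onFun] using ((hSd hij).union_right (hR i).symm)
    · simpa [update_of_ne hi, update_of_ne hj, onFun] using hSd hij
  · refine Set.eq_univ_of_forall fun x => ?_
    by_cases hx : x ∈ ⋃ j, S j
    · obtain ⟨j, hj⟩ := Set.mem_iUnion.1 hx
      refine Set.mem_iUnion.2 ⟨j, ?_⟩
      rcases eq_or_ne j i₀ with rfl | hj'
      · simp [hj]
      · simpa [update_of_ne hj'] using hj
    · exact Set.mem_iUnion.2 ⟨i₀, by simp only [update_self]; exact .inr hx⟩
  · rcases eq_or_ne i i₀ with rfl | hi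
    · intro x hx
      simp only [update_self, Set.mem_symmDiff, Set.mem_union] at hx
      tauto
    · simp [update_of_ne hi]

theorem measureReal_compl_iUnion_le {X Y ι : Type*} [MeasurableSpace X] [MeasurableSpace Y]
    {μ : Measure X} [IsProbabilityMeasure μ] {ν : Measure Y} [IsProbabilityMeasure ν]
    [Fintype ι] {A : ι → Set X} {B : ι → Set Y} (hAm : ∀ σ, MeasurableSet (A σ))
    (hAd : Pairwise (Disjoint on A)) (hAc : ⋃ σ, A σ = Set.univ)
    (hBm : ∀ σ, MeasurableSet (B σ)) (hBd : Pairwise (Disjoint on B)) :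
    ν.real (⋃ σ, B σ)ᶜ ≤ ∑ σ, |ν.real (B σ) - μ.real (A σ)| := by
  have hA : ∑ σ, μ.real (A σ) = 1 := by
    rw [← measureReal_iUnion_fintype hAd hAm, hAc, probReal_univ]
  rw [measureReal_compl (MeasurableSet.iUnion hBm), probReal_univ,
    measureReal_iUnion_fintype hBd hBm, ← hA, ← Finset.sum_sub_distrib]
  exact Finset.sum_le_sum fun σ _ => abs_sub_comm (ν.real (B σ)) _ ▸ le_abs_self _

theorem abs_measureReal_inter_sub_le {Y : Type*} [MeasurableSpace Y] {ν : Measure Y}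
    [IsFiniteMeasure ν] {s s' t t' : Set Y} (hs : MeasurableSet s) (hs' : MeasurableSet s')
    (ht : MeasurableSet t) (ht' : MeasurableSet t') :
    |ν.real (s ∩ t) - ν.real (s' ∩ t')| ≤ ν.real (s ∆ s') + ν.real (t ∆ t') := by
  refine (abs_measureReal_sub_le_measureReal_symmDiff (hs.inter ht).nullMeasurableSet
    (hs'.inter ht').nullMeasurableSet).trans ((measureReal_mono ?_).trans
      (measureReal_union_le _ _))
  intro x
  simp only [Set.mem_symmDiff, Set.mem_inter_iff, Set.mem_union]
  tauto

theorem abs_measureReal_inter_sub_le_of_fiberUnion_eq {X Y ι κ κ' : Type*} [MeasurableSpace X]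
    [MeasurableSpace Y] {μ : Measure X} [IsFiniteMeasure μ] {ν : Measure Y} [IsFiniteMeasure ν]
    [Fintype ι] [DecidableEq κ] [DecidableEq κ'] {A : ι → Set X} {B : ι → Set Y}
    (hAm : ∀ σ, MeasurableSet (A σ)) (hAd : Pairwise (Disjoint on A))
    (hBm : ∀ σ, MeasurableSet (B σ)) (hBd : Pairwise (Disjoint on B))
    (π : ι → κ) (π' : ι → κ') (c : κ) (c' : κ') {s t : Set X} (hs : fiberUnion A π c = s)
    (ht : fiberUnion A π' c' = t) {s' t' : Set Y} (hs' : MeasurableSet s')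
    (ht' : MeasurableSet t') :
    |μ.real (s ∩ t) - ν.real (s' ∩ t')| ≤
      ∑ σ ∈ Finset.univ.filter (fun σ => (π σ, π' σ) = (c, c')), |μ.real (A σ) - ν.real (B σ)| +
        (ν.real (fiberUnion B π c ∆ s') + ν.real (fiberUnion B π' c' ∆ t')) := by
  subst hs ht
  calc _ ≤ |μ.real (fiberUnion A π c ∩ fiberUnion A π' c') -
          ν.real (fiberUnion B π c ∩ fiberUnion B π' c')| +
        |ν.real (fiberUnion B π c ∩ fiberUnion B π' c') - ν.real (s' ∩ t')| := abs_sub_le _ _ _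
    _ ≤ _ := by
      gcongr
      · rw [fiberUnion_inter_fiberUnion hAd, fiberUnion_inter_fiberUnion hBd]
        exact abs_measureReal_fiberUnion_sub_le hAm hAd hBm hBd _ _
      · exact abs_measureReal_inter_sub_le (measurableSet_fiberUnion hBm π c) hs'
          (measurableSet_fiberUnion hBm π' c') ht'

section converse

variable {G X Y : Type*} [Group G] [MeasurableSpace X] [MeasurableSpace Y]
  {μ : Measure X} [IsProbabilityMeasure μ] {a : G → X → X}
  {ν : Measure Y} [IsProbabilityMeasure ν] {b : G → Y → Y}
  {k : ℕ} {P : Fin k → Set X} {F : Finset G} {h1 : (1 : G) ∈ F} {δ : ℝ}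
  {φ : (F → Fin k) → Set Y}

theorem IsApproxHom.exists_isPartition_symmDiff_lt (ha : IsPMP μ a) (hP : IsPartition P)
    (hφ : IsApproxHom μ a ν b P F h1 δ φ) :
    ∃ Q : Fin k → Set Y, IsPartition Q ∧ ∀ i, ν.real (fiberUnion φ (· ⟨1, h1⟩) i ∆ Q i) < δ := by
  classical
  obtain ⟨hφm, hφd, -, hsum⟩ := hφ
  rw [tsum_fintype] at hsum
  obtain ⟨x⟩ := nonempty_of_isProbabilityMeasure μ
  obtain ⟨i₀, -⟩ := Set.mem_iUnion.1 (hP.2.2.symm ▸ Set.mem_univ x)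
  obtain ⟨Q, hQ, hSQ⟩ := exists_isPartition_symmDiff_subset i₀
    (measurableSet_fiberUnion hφm (· ⟨1, h1⟩)) (pairwise_disjoint_fiberUnion hφd _)
  refine ⟨Q, hQ, fun i => (measureReal_mono (hSQ i)).trans_lt ?_⟩
  rw [iUnion_fiberUnion]
  exact (measureReal_compl_iUnion_le (measurableSet_refineAtom ha hP.1)
    (pairwise_disjoint_refineAtom ha hP.2.1) (iUnion_refineAtom ha hP.2.2 ⟨1, h1⟩) hφm
    hφd).trans_lt hsum

theorem IsApproxHom.exists_isPartition_statDistAt_le (ha : IsPMP μ a) (hb : IsPMP ν b)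
    (hP : IsPartition P) (hφ : IsApproxHom μ a ν b P F h1 δ φ) :
    ∃ Q : Fin k → Set Y, IsPartition Q ∧
      ∀ f ∈ F, statDistAt μ a ν b f P Q ≤ (3 * k ^ 2 + 1) * δ := by
  classical
  obtain ⟨Q, hQ, hSQ⟩ := hφ.exists_isPartition_symmDiff_lt ha hP
  obtain ⟨hφm, hφd, hequiv, hsum⟩ := hφ
  rw [tsum_fintype] at hsum
  refine ⟨Q, hQ, fun f hf => ?_⟩
  set S := fiberUnion φ (· ⟨1, h1⟩)
  set E : Fin k × Fin k → ℝ := fun p =>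
    ∑ σ ∈ Finset.univ.filter (fun σ => (σ ⟨1, h1⟩, σ ⟨f, hf⟩) = p),
      |μ.real (refineAtom a F P σ) - ν.real (φ σ)|
  have hfQ (j : Fin k) : ν.real (fiberUnion φ (· ⟨f, hf⟩) j ∆ actSet b f (Q j)) ≤ 2 * δ := by
    have hSj : MeasurableSet (S j) := measurableSet_fiberUnion hφm _ j
    calc _ ≤ ν.real (fiberUnion φ (· ⟨f, hf⟩) j ∆ actSet b f (S j)) +
          ν.real (actSet b f (S j) ∆ actSet b f (Q j)) := measureReal_symmDiff_le _
      _ ≤ δ + δ := by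
        rw [symmDiff_comm, ← hb.actSet_symmDiff, hb.measureReal_actSet f (hSj.symmDiff (hQ.1 j))]
        exact add_le_add (hequiv ⟨f, hf⟩ j).le (hSQ j).le
      _ = 2 * δ := by ring
  have hentry (i j : Fin k) :
      |μ.real (P i ∩ actSet a f (P j)) - ν.real (Q i ∩ actSet b f (Q j))| ≤ E (i, j) + 3 * δ := by
    refine (abs_measureReal_inter_sub_le_of_fiberUnion_eq (measurableSet_refineAtom ha hP.1)
      (pairwise_disjoint_refineAtom ha hP.2.1) hφm hφd (· ⟨1, h1⟩) (· ⟨f, hf⟩) i j ?_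
      (fiberUnion_refineAtom ha hP.2.2 _ j) (hQ.1 i) (hb.measurableSet_actSet f (hQ.1 j))).trans ?_
    · rw [fiberUnion_refineAtom ha hP.2.2, ha.actSet_one]
    · linarith [hSQ i, hfQ j]
  calc statDistAt μ a ν b f P Q ≤ ∑ i, ∑ j, (E (i, j) + 3 * δ) :=
        Finset.sum_le_sum fun i _ => Finset.sum_le_sum fun j _ => hentry i j
    _ = ∑ σ, |μ.real (refineAtom a F P σ) - ν.real (φ σ)| + k ^ 2 * (3 * δ) := by
      rw [← Fintype.sum_prod_type' (fun i j => E (i, j) + 3 * δ), Finset.sum_add_distrib,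
        Finset.sum_fiberwise]
      simp [sq]
    _ ≤ (3 * k ^ 2 + 1) * δ := by
      simp_rw [abs_sub_comm (μ.real _)]
      linarith

theorem wc_of_forall_exists_isApproxHom (ha : IsPMP μ a) (hb : IsPMP ν b)
    (h : ∀ (k : ℕ) (P : Fin k → Set X), IsPartition P → ∀ (F : Finset G) (h1 : (1 : G) ∈ F)
      (δ : ℝ), 0 < δ → ∃ φ, IsApproxHom μ a ν b P F h1 δ φ) :
    WC μ a ν b := by
  classical
  intro ε hε F k P hP
  set c : ℝ := (3 * k ^ 2 + 1) * F.card
  obtain ⟨φ, hφ⟩ := h k P hP (insert 1 F) (Finset.mem_insert_self 1 F) (ε / (c + 1))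
    (by positivity)
  obtain ⟨Q, hQ, hQF⟩ := hφ.exists_isPartition_statDistAt_le ha hb hP
  refine ⟨Q, hQ, ?_⟩
  calc statDist μ a ν b F P Q = ∑ f ∈ F, statDistAt μ a ν b f P Q :=
        statDist_eq_sum_statDistAt F P Q
    _ ≤ ∑ _f ∈ F, (3 * k ^ 2 + 1) * (ε / (c + 1)) :=
        Finset.sum_le_sum fun f hf => hQF f (Finset.mem_insert_of_mem hf)
    _ = c / (c + 1) * ε := by rw [Finset.sum_const, nsmul_eq_mul]; ring
    _ ≤ ε := mul_le_of_le_one_left hε.le ((div_le_one (by positivity)).2 (by linarith))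

end converse

theorem wc_iff_exists_homomorphisms_general {G : Type*} [Group G]
    {X Y : Type*} [MeasurableSpace X] [MeasurableSpace Y]
    (μ : Measure X) [IsProbabilityMeasure μ] (a : G → X → X) (ha : IsPMP μ a)
    (ν : Measure Y) [IsProbabilityMeasure ν] (b : G → Y → Y) (hb : IsPMP ν b) :
    WC μ a ν b ↔
      ∀ (k : ℕ) (P : Fin k → Set X), IsPartition P →
        ∀ (F : Finset G) (h1 : (1 : G) ∈ F), ∀ δ : ℝ, 0 < δ →
          ∃ φ : (↥F → Fin k) → Set Y,
            (∀ σ, MeasurableSet (φ σ)) ∧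
            Pairwise (Function.onFun Disjoint φ) ∧
            (∀ (f : ↥F) (i : Fin k),
              (ν ((actSet b (f : G) (⋃ (σ : ↥F → Fin k) (_ : σ ⟨1, h1⟩ = i), φ σ)) ∆
                  (⋃ (σ : ↥F → Fin k) (_ : σ f = i), φ σ))).toReal < δ) ∧
            (∑' σ : ↥F → Fin k,
              |(ν (φ σ)).toReal -
                (μ (⋂ f : ↥F, actSet a (f : G) (P (σ f)))).toReal| < δ) :=
  ⟨fun h _ _ hP _ h1 _ hδ => h.exists_isApproxHom ha hb hP h1 hδ,
    wc_of_forall_exists_isApproxHom ha hb⟩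

/-- `a ≺ b` iff for every finite partition `P` of `X_a`, every finite
`F ⊆ G` containing the identity and every `δ > 0` there is an `(P, F, δ)`-homomorphism
from `a` to `b`: a family of pairwise disjoint measurable sets `φ σ ⊆ X_b`, indexed by
the atoms `⋂_{f ∈ F} f · P (σ f)` of the partition generated by the `F`-translates of
`P`, which is almost equivariant and almost measure-preserving. -/
theorem wc_iff_exists_homomorphisms {G : Type*} [Group G] [Countable G]
    {X Y : Type*} [MeasurableSpace X] [MeasurableSpace Y]
    (μ : Measure X) [IsProbabilityMeasure μ] (a : G → X → X) (ha : IsPMP μ a)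
    (ν : Measure Y) [IsProbabilityMeasure ν] (b : G → Y → Y) (hb : IsPMP ν b) :
    WC μ a ν b ↔
      ∀ (k : ℕ) (P : Fin k → Set X), IsPartition P →
        ∀ (F : Finset G) (h1 : (1 : G) ∈ F), ∀ δ : ℝ, 0 < δ →
          ∃ φ : (↥F → Fin k) → Set Y,
            (∀ σ, MeasurableSet (φ σ)) ∧
            Pairwise (Function.onFun Disjoint φ) ∧
            (∀ (f : ↥F) (i : Fin k),
              (ν ((actSet b (f : G) (⋃ (σ : ↥F → Fin k) (_ : σ ⟨1, h1⟩ = i), φ σ)) ∆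
                  (⋃ (σ : ↥F → Fin k) (_ : σ f = i), φ σ))).toReal < δ) ∧
            (∑' σ : ↥F → Fin k,
              |(ν (φ σ)).toReal -
                (μ (⋂ f : ↥F, actSet a (f : G) (P (σ f)))).toReal| < δ) :=
  wc_iff_exists_homomorphisms_general μ a ha ν b hb
end

section
/- Let G be a countable group and let (H_n) be a chain of finite-index subgroups of G with [H_n : H_{n+1}] ≥ 2 for every n, and let a = a^{(H_n)} be the associated profinite action on (X, μ). Then for every ε > 0 there exists a countable measurable partition α of X which is generating (the smallest G-invariant σ-algebra containing α equals the Borel σ-algebra of X up to μ-null sets) and whose Shannon entropy satisfies H(α) := Σ_{A ∈ α} −μ(A) log μ(A) ≤ ε. -/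
open MeasureTheory Filter Topology
open scoped ENNReal symmDiff

/-! The profinite action associated to a chain of finite-index subgroups. -/

/-- Each coset space `G ⧸ K` of the countable group `G` is a finite (or countable)
discrete space; we equip it with the σ-algebra of all subsets. -/
instance quotientCosetMeasurableSpace {G : Type*} [Group G] (K : Subgroup G) :
    MeasurableSpace (G ⧸ K) := ⊤

/-- The canonical projection `G ⧸ H → G ⧸ K` for nested subgroups `H ≤ K`. -/
def cosetMap {G : Type*} [Group G] {H K : Subgroup G} (h : H ≤ K) : G ⧸ H → G ⧸ K :=
  Quotient.map' id fun a b hab => by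
    rw [QuotientGroup.leftRel_apply] at hab ⊢
    exact h hab

lemma cosetMap_smul {G : Type*} [Group G] {H K : Subgroup G} (h : H ≤ K) (g : G)
    (q : G ⧸ H) : cosetMap h (g • q) = g • cosetMap h q := by
  induction q using QuotientGroup.induction_on with
  | _ a => rfl

/-- The inverse limit of the coset spaces `G ⧸ H n` along a decreasing chain of
subgroups: the space of the profinite action `a^{(H_n)}`, as a closed subset of the
product `∀ n, G ⧸ H n` (with the Borel = product σ-algebra of the finite discrete
spaces `G ⧸ H n`). -/
def profSpace {G : Type*} [Group G] (H : ℕ → Subgroup G) (hdec : ∀ n, H (n + 1) ≤ H n) :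
    Type _ :=
  {x : ∀ n, G ⧸ H n // ∀ n, cosetMap (hdec n) (x (n + 1)) = x n}

instance profSpaceMeasurableSpace {G : Type*} [Group G] (H : ℕ → Subgroup G)
    (hdec : ∀ n, H (n + 1) ≤ H n) : MeasurableSpace (profSpace H hdec) :=
  inferInstanceAs (MeasurableSpace
    {x : ∀ n, G ⧸ H n // ∀ n, cosetMap (hdec n) (x (n + 1)) = x n})

/-- The profinite action of `G` on the inverse limit of the `G ⧸ H n`, by left
multiplication in every coordinate. -/
def profAct {G : Type*} [Group G] (H : ℕ → Subgroup G) (hdec : ∀ n, H (n + 1) ≤ H n)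
    (g : G) (x : profSpace H hdec) : profSpace H hdec :=
  ⟨fun n => g • x.1 n, fun n => by rw [cosetMap_smul, x.2 n]⟩

/-- The uniform probability measure on the (finite) coset space `G ⧸ K`. -/
noncomputable def unifQuot {G : Type*} [Group G] (K : Subgroup G) : Measure (G ⧸ K) :=
  (K.index : ℝ≥0∞)⁻¹ • Measure.count

/-! The partition is cut out by the cylinders `C n` of points whose `n`-th coordinate is the
trivial coset, for `n ≥ N`: one large piece `(C N)ᶜ` (together with the null set `⋂ C n`) and
the shells `C n \ C (n + 1)`. Since `μ (C n) = [G : H n]⁻¹ ≤ 2⁻ⁿ`, the entropy of this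
partition is bounded by a geometric tail, which is small for large `N`. The `g`-translates of
the shells exhaust the cylinder `g C N`, and likewise every `g C n` with `n ≥ N`, up to the
null set `⋂ g C n`; and these cylinders already generate the σ-algebra of the inverse limit. -/

open Real

section Layers

variable {α : Type*} {C : ℕ → Set α}

/-- The partition `(C 0)ᶜ ∪ ⋂ n, C n, C 0 \ C 1, C 1 \ C 2, …` cut out by a decreasing
sequence of sets. -/
def antitoneLayers (C : ℕ → Set α) : ℕ → Set α :=
  disjointed fun n => (C n)ᶜ ∪ ⋂ m, C m

lemma antitoneLayers_zero (C : ℕ → Set α) : antitoneLayers C 0 = (C 0)ᶜ ∪ ⋂ m, C m :=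
  disjointed_zero _

lemma antitoneLayers_succ (hC : Antitone C) (k : ℕ) :
    antitoneLayers C (k + 1) = C k \ C (k + 1) := by
  have hmono : Monotone fun n => (C n)ᶜ ∪ ⋂ m, C m :=
    fun a b hab => Set.union_subset_union_left _ (Set.compl_subset_compl.2 (hC hab))
  rw [antitoneLayers, hmono.disjointed_add_one]
  have hsub : (⋂ m, C m) ⊆ C (k + 1) := Set.iInter_subset _ _
  ext x
  simp only [Set.mem_sdiff, Set.mem_union, Set.mem_compl_iff, not_or, not_not]
  constructor
  · rintro ⟨hx | hx, hk, hD⟩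
    · exact ⟨hk, hx⟩
    · exact absurd hx hD
  · rintro ⟨hk, hx⟩
    exact ⟨Or.inl hx, hk, fun hD => hx (hsub hD)⟩

lemma pairwise_disjoint_antitoneLayers (C : ℕ → Set α) :
    Pairwise (Function.onFun Disjoint (antitoneLayers C)) :=
  disjoint_disjointed _

lemma iUnion_antitoneLayers (C : ℕ → Set α) : ⋃ i, antitoneLayers C i = Set.univ := by
  rw [antitoneLayers, iUnion_disjointed, ← Set.iUnion_union, ← Set.compl_iInter,
    Set.compl_union_self]

lemma measurableSet_antitoneLayers [MeasurableSpace α] (hC : ∀ n, MeasurableSet (C n))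
    (i : ℕ) : MeasurableSet (antitoneLayers C i) :=
  MeasurableSet.disjointed (fun n => (hC n).compl.union (MeasurableSet.iInter hC)) i

lemma Antitone.sdiff_iInter_eq_iUnion_sdiff_succ (hC : Antitone C) :
    C 0 \ ⋂ n, C n = ⋃ k, C k \ C (k + 1) := by
  ext x
  simp only [Set.mem_sdiff, Set.mem_iInter, Set.mem_iUnion, not_forall]
  constructor
  · rintro ⟨h0, m, hm⟩
    by_contra! hstep
    have hall : ∀ k, x ∈ C k := fun k => by
      induction k with
      | zero => exact h0
      | succ k ih => exact hstep k ih
    exact hm (hall m)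
  · rintro ⟨k, hk, hk'⟩
    exact ⟨hC (Nat.zero_le k) hk, k + 1, hk'⟩

end Layers

lemma Real.negMulLog_le_two_mul_sqrt {t : ℝ} (ht : 0 ≤ t) : negMulLog t ≤ 2 * √t := by
  rcases ht.eq_or_lt with rfl | ht
  · simp
  have hlog := one_sub_inv_le_log_of_pos (sqrt_pos.2 ht)
  calc negMulLog t = -(2 * t) * log √t := by rw [negMulLog, log_sqrt ht.le]; ring
    _ ≤ -(2 * t) * (1 - (√t)⁻¹) := mul_le_mul_of_nonpos_left hlog (by linarith)
    _ = 2 * (t / √t) - 2 * t := by ring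
    _ ≤ 2 * √t := by rw [div_sqrt]; linarith

/-- The masses are bounded by squares so that `negMulLog t ≤ 2 * √t` makes the tail geometric
in `s`. -/
lemma summable_negMulLog_and_tsum_le {p : ℕ → ℝ} {s : ℝ} (hs0 : 0 ≤ s) (hs1 : s < 1)
    {N : ℕ} (hp : ∀ i, 0 ≤ p i) (hp0 : 1 - p 0 ≤ (s ^ N) ^ 2)
    (hp_succ : ∀ k, p (k + 1) ≤ (s ^ (N + k)) ^ 2) :
    Summable (fun i => negMulLog (p i)) ∧ ∑' i, negMulLog (p i) ≤ 3 * s ^ N / (1 - s) := by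
  have hsN : 0 ≤ s ^ N := pow_nonneg hs0 N
  have hsN1 : s ^ N ≤ 1 := pow_le_one₀ hs0 hs1.le
  have hterm : ∀ k, negMulLog (p (k + 1)) ≤ 2 * s ^ N * s ^ k := fun k =>
    calc negMulLog (p (k + 1)) ≤ 2 * √(p (k + 1)) := negMulLog_le_two_mul_sqrt (hp _)
      _ ≤ 2 * √((s ^ (N + k)) ^ 2) := by gcongr; exact hp_succ k
      _ = 2 * s ^ N * s ^ k := by rw [sqrt_sq (pow_nonneg hs0 _), pow_add]; ring
  have hnonneg : ∀ k, 0 ≤ negMulLog (p (k + 1)) := fun k =>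
    negMulLog_nonneg (hp _) ((hp_succ k).trans (pow_le_one₀ (pow_nonneg hs0 _)
      (pow_le_one₀ hs0 hs1.le)))
  have hgeom : HasSum (fun k : ℕ => 2 * s ^ N * s ^ k) (2 * s ^ N * (1 - s)⁻¹) :=
    (hasSum_geometric_of_lt_one hs0 hs1).mul_left _
  have htail : Summable fun k => negMulLog (p (k + 1)) :=
    Summable.of_nonneg_of_le hnonneg hterm hgeom.summable
  have hsum : Summable fun i => negMulLog (p i) := (summable_nat_add_iff 1).1 htail
  refine ⟨hsum, ?_⟩
  have hhead : negMulLog (p 0) ≤ s ^ N / (1 - s) :=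
    calc negMulLog (p 0) ≤ 1 - p 0 := negMulLog_le_one_sub_self (hp 0)
      _ ≤ s ^ N := hp0.trans (pow_le_of_le_one hsN hsN1 two_ne_zero)
      _ ≤ s ^ N / (1 - s) := le_div_self hsN (by linarith) (by linarith)
  have htail_le : ∑' k, negMulLog (p (k + 1)) ≤ 2 * s ^ N * (1 - s)⁻¹ :=
    hgeom.tsum_eq ▸ htail.tsum_le_tsum hterm hgeom.summable
  rw [hsum.tsum_eq_zero_add]
  calc negMulLog (p 0) + ∑' k, negMulLog (p (k + 1))
      ≤ s ^ N / (1 - s) + 2 * s ^ N * (1 - s)⁻¹ := add_le_add hhead htail_le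
    _ = 3 * s ^ N / (1 - s) := by ring

section ProfiniteAction

variable {G : Type*} [Group G] {H : ℕ → Subgroup G} {hdec : ∀ n, H (n + 1) ≤ H n}

lemma profSpace_coe_eq_of_le (x : profSpace H hdec) (g : G) {m n : ℕ} (hmn : m ≤ n)
    (hx : x.1 n = (g : G ⧸ H n)) : x.1 m = (g : G ⧸ H m) := by
  induction n, hmn using Nat.le_induction with
  | base => exact hx
  | succ n _ ih => exact ih (by rw [← x.2 n, hx]; rfl)

variable (hdec) in
def cosetCyl (g : G) (n : ℕ) : Set (profSpace H hdec) :=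
  {x | x.1 n = (g : G ⧸ H n)}

lemma cosetCyl_antitone (g : G) : Antitone (cosetCyl hdec g) :=
  fun _ _ hmn x hx => profSpace_coe_eq_of_le x g hmn hx

lemma measurable_profSpace_apply (n : ℕ) : Measurable fun x : profSpace H hdec => x.1 n :=
  (measurable_pi_apply n).comp measurable_subtype_coe

lemma measurableSet_cosetCyl (g : G) (n : ℕ) : MeasurableSet (cosetCyl hdec g n) :=
  measurable_profSpace_apply n (show MeasurableSet {(g : G ⧸ H n)} from trivial)

lemma preimage_eval_eq_iUnion_cosetCyl {n m : ℕ} (hnm : n ≤ m) (S : Set (G ⧸ H n)) :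
    (fun x : profSpace H hdec => x.1 n) ⁻¹' S
      = ⋃ g : {g : G // (g : G ⧸ H n) ∈ S}, cosetCyl hdec g m := by
  ext x
  simp only [Set.mem_preimage, Set.mem_iUnion]
  constructor
  · intro hx
    obtain ⟨g, hg⟩ := QuotientGroup.mk_surjective (x.1 m)
    exact ⟨⟨g, profSpace_coe_eq_of_le x g hnm hg.symm ▸ hx⟩, hg.symm⟩
  · rintro ⟨⟨g, hg⟩, hx⟩
    rwa [profSpace_coe_eq_of_le x g hnm hx]

lemma profAct_inv_profAct (g : G) (x : profSpace H hdec) :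
    profAct H hdec g⁻¹ (profAct H hdec g x) = x :=
  Subtype.ext (funext fun n => inv_smul_smul g (x.1 n))

lemma profAct_injective (g : G) : Function.Injective (profAct H hdec g) :=
  Function.LeftInverse.injective (g := profAct H hdec g⁻¹) (profAct_inv_profAct g)

lemma image_profAct_cosetCyl (g h : G) (n : ℕ) :
    profAct H hdec g '' cosetCyl hdec h n = cosetCyl hdec (g * h) n := by
  ext x
  constructor
  · rintro ⟨y, hy, rfl⟩
    show g • y.1 n = _
    rw [hy]
    rfl
  · intro hx
    refine ⟨profAct H hdec g⁻¹ x, ?_, by simpa using profAct_inv_profAct g⁻¹ x⟩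
    show g⁻¹ • x.1 n = _
    rw [hx, inv_smul_eq_iff]
    rfl

lemma two_pow_le_index (hdec : ∀ n, H (n + 1) ≤ H n) (hfi : ∀ n, (H n).FiniteIndex)
    (hidx : ∀ n, 2 ≤ (H (n + 1)).relIndex (H n)) (n : ℕ) : 2 ^ n ≤ (H n).index := by
  induction n with
  | zero => simpa using Nat.one_le_iff_ne_zero.2 (hfi 0).index_ne_zero
  | succ n ih =>
    calc 2 ^ (n + 1) = 2 * 2 ^ n := by ring
    _ ≤ (H (n + 1)).relIndex (H n) * (H n).index := Nat.mul_le_mul (hidx n) ih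
    _ = (H (n + 1)).index := Subgroup.relIndex_mul_index (hdec n)

variable {μ : Measure (profSpace H hdec)}

lemma measureReal_cosetCyl (hμ : ∀ n, μ.map (fun x => x.1 n) = unifQuot (H n)) (g : G)
    (n : ℕ) : μ.real (cosetCyl hdec g n) = ((H n).index : ℝ)⁻¹ := by
  have hsingleton : MeasurableSet {(g : G ⧸ H n)} := trivial
  have hmap := Measure.map_apply (measurable_profSpace_apply n) hsingleton (μ := μ)
  rw [hμ n, unifQuot, Measure.smul_apply, Measure.count_singleton' hsingleton, smul_eq_mul,
    mul_one] at hmap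
  rw [measureReal_def, show cosetCyl hdec g n = (fun x => x.1 n) ⁻¹' {(g : G ⧸ H n)} from rfl,
    ← hmap, ENNReal.toReal_inv, ENNReal.toReal_natCast]

lemma measureReal_cosetCyl_le (hfi : ∀ n, (H n).FiniteIndex)
    (hidx : ∀ n, 2 ≤ (H (n + 1)).relIndex (H n))
    (hμ : ∀ n, μ.map (fun x => x.1 n) = unifQuot (H n)) (g : G) (n : ℕ) :
    μ.real (cosetCyl hdec g n) ≤ (1 / 2) ^ n := by
  rw [measureReal_cosetCyl hμ, one_div_pow, one_div]
  exact inv_anti₀ (by positivity) (by exact_mod_cast two_pow_le_index hdec hfi hidx n)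

lemma measure_iInter_cosetCyl_add [IsFiniteMeasure μ] (hfi : ∀ n, (H n).FiniteIndex)
    (hidx : ∀ n, 2 ≤ (H (n + 1)).relIndex (H n))
    (hμ : ∀ n, μ.map (fun x => x.1 n) = unifQuot (H n)) (g : G) (m : ℕ) :
    μ (⋂ n, cosetCyl hdec g (m + n)) = 0 := by
  have hbound : ∀ n, μ.real (⋂ n, cosetCyl hdec g (m + n)) ≤ (1 / 2) ^ n := fun n =>
    calc μ.real (⋂ n, cosetCyl hdec g (m + n)) ≤ μ.real (cosetCyl hdec g (m + n)) :=
          measureReal_mono (Set.iInter_subset _ n)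
      _ ≤ (1 / 2) ^ (m + n) := measureReal_cosetCyl_le hfi hidx hμ g (m + n)
      _ ≤ (1 / 2) ^ n := pow_le_pow_of_le_one (by norm_num) (by norm_num) (by omega)
  have hzero := ge_of_tendsto' (tendsto_pow_atTop_nhds_zero_of_lt_one (r := (1 / 2 : ℝ))
    (by norm_num) (by norm_num)) hbound
  exact (measureReal_eq_zero_iff).1 (le_antisymm hzero measureReal_nonneg)

lemma exists_summable_negMulLog_antitoneLayers_cosetCyl [IsProbabilityMeasure μ]
    (hfi : ∀ n, (H n).FiniteIndex) (hidx : ∀ n, 2 ≤ (H (n + 1)).relIndex (H n))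
    (hμ : ∀ n, μ.map (fun x => x.1 n) = unifQuot (H n)) {ε : ℝ} (hε : 0 < ε) :
    ∃ N : ℕ,
      Summable (fun i =>
        negMulLog (μ.real (antitoneLayers (fun n => cosetCyl hdec 1 (N + n)) i))) ∧
      ∑' i, negMulLog (μ.real (antitoneLayers (fun n => cosetCyl hdec 1 (N + n)) i)) ≤ ε := by
  set s : ℝ := √(1 / 2)
  have hs0 : 0 ≤ s := sqrt_nonneg _
  have hs1 : s < 1 := by rw [sqrt_lt' one_pos]; norm_num
  have hhalf : ∀ n, (1 / 2 : ℝ) ^ n = (s ^ n) ^ 2 := fun n => by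
    rw [← pow_mul, mul_comm, pow_mul, sq_sqrt (by norm_num)]
  obtain ⟨N, hN⟩ : ∃ N : ℕ, 3 * s ^ N / (1 - s) ≤ ε := by
    have h := ((tendsto_pow_atTop_nhds_zero_of_lt_one hs0 hs1).const_mul 3).div_const (1 - s)
    rw [mul_zero, zero_div] at h
    exact (h.eventually (Iic_mem_nhds hε)).exists
  set C := fun n => cosetCyl hdec 1 (N + n)
  have hC : Antitone C := fun a b hab => cosetCyl_antitone 1 (by omega)
  have hCμ : ∀ k, μ.real (C k) ≤ (s ^ (N + k)) ^ 2 := fun k =>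
    hhalf (N + k) ▸ measureReal_cosetCyl_le hfi hidx hμ 1 (N + k)
  have hhead : 1 - μ.real (antitoneLayers C 0) ≤ (s ^ N) ^ 2 := by
    have hcompl : μ.real (C 0)ᶜ ≤ μ.real (antitoneLayers C 0) :=
      measureReal_mono (antitoneLayers_zero C ▸ Set.subset_union_left)
    have hC0 : μ.real (C 0) ≤ (s ^ N) ^ 2 := hCμ 0
    rw [probReal_compl_eq_one_sub (measurableSet_cosetCyl 1 _)] at hcompl
    linarith
  have htail : ∀ k, μ.real (antitoneLayers C (k + 1)) ≤ (s ^ (N + k)) ^ 2 := fun k =>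
    (measureReal_mono (antitoneLayers_succ hC k ▸ Set.sdiff_subset)).trans (hCμ k)
  obtain ⟨hsumm, htsum⟩ :=
    summable_negMulLog_and_tsum_le hs0 hs1 (fun _ => measureReal_nonneg) hhead htail
  exact ⟨N, hsumm, htsum.trans hN⟩

lemma exists_measurableSet_measure_symmDiff_eq_zero_of_cosetCyl [Countable G]
    {𝒢 : Set (Set (profSpace H hdec))} (N : ℕ)
    (hcyl : ∀ g n, N ≤ n →
      EventuallyMeasurableSet (MeasurableSpace.generateFrom 𝒢) (ae μ) (cosetCyl hdec g n))
    {A : Set (profSpace H hdec)} (hA : MeasurableSet A) :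
    ∃ B, MeasurableSet[MeasurableSpace.generateFrom 𝒢] B ∧ μ (A ∆ B) = 0 := by
  have hle : profSpaceMeasurableSpace H hdec ≤
      eventuallyMeasurableSpace (MeasurableSpace.generateFrom 𝒢) (ae μ) := by
    refine MeasurableSpace.comap_le_iff_le_map.2 (iSup_le fun n => ?_)
    rintro _ ⟨S, -, rfl⟩
    change EventuallyMeasurableSet _ _ ((fun x : profSpace H hdec => x.1 n) ⁻¹' S)
    rw [preimage_eval_eq_iUnion_cosetCyl (Nat.le_add_left n N)]
    exact MeasurableSet.iUnion fun g => hcyl g _ (Nat.le_add_right N n)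
  obtain ⟨B, hB, hAB⟩ := hle A hA
  exact ⟨B, hB, measure_symmDiff_eq_zero_iff.2 hAB⟩

lemma cosetCyl_ae_eq_iUnion_image_antitoneLayers [IsFiniteMeasure μ]
    (hfi : ∀ n, (H n).FiniteIndex) (hidx : ∀ n, 2 ≤ (H (n + 1)).relIndex (H n))
    (hμ : ∀ n, μ.map (fun x => x.1 n) = unifQuot (H n)) (g : G) (N j : ℕ) :
    cosetCyl hdec g (N + j) =ᵐ[μ]
      ⋃ k, profAct H hdec g '' antitoneLayers (fun n => cosetCyl hdec 1 (N + n)) (j + k + 1) := by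
  have himage : ∀ k, profAct H hdec g '' antitoneLayers (fun n => cosetCyl hdec 1 (N + n))
      (j + k + 1) = cosetCyl hdec g (N + j + k) \ cosetCyl hdec g (N + j + (k + 1)) := by
    intro k
    rw [antitoneLayers_succ (fun a b hab => cosetCyl_antitone 1 (by omega)),
      Set.image_sdiff (profAct_injective g), image_profAct_cosetCyl, image_profAct_cosetCyl,
      mul_one]
    simp only [add_assoc]
  have hdiff := Antitone.sdiff_iInter_eq_iUnion_sdiff_succ
    (C := fun k => cosetCyl hdec g (N + j + k)) (fun a b hab => cosetCyl_antitone g (by omega))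
  simp only [add_zero] at hdiff
  rw [Set.iUnion_congr himage, ← hdiff]
  exact (sdiff_null_ae_eq_self (measure_iInter_cosetCyl_add hfi hidx hμ g _)).symm

end ProfiniteAction

/-- Lemma 3.13. If `(H n)` is a chain of finite-index subgroups of a
countable group `G` with `[H n : H (n+1)] ≥ 2` for all `n`, then for every `ε > 0` the
profinite action `a^{(H_n)}` admits a countable generating measurable partition (its
`G`-translates generate the full σ-algebra modulo null sets) of Shannon entropy at
most `ε`. -/
theorem profinite_generating_partition_small_entropy {G : Type*} [Group G] [Countable G]
    (H : ℕ → Subgroup G) (hdec : ∀ n, H (n + 1) ≤ H n) (hfi : ∀ n, (H n).FiniteIndex)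
    (hidx : ∀ n, 2 ≤ (H (n + 1)).relIndex (H n))
    (μ : Measure (profSpace H hdec)) [IsProbabilityMeasure μ]
    (hμ : ∀ n, μ.map (fun x => x.1 n) = unifQuot (H n))
    (ε : ℝ) (hε : 0 < ε) :
    ∃ P : ℕ → Set (profSpace H hdec),
      (∀ i, MeasurableSet (P i)) ∧
      Pairwise (Function.onFun Disjoint P) ∧
      (⋃ i, P i) = Set.univ ∧
      (∀ A : Set (profSpace H hdec), MeasurableSet A →
        ∃ B : Set (profSpace H hdec),
          MeasurableSet[MeasurableSpace.generateFrom
            {S : Set (profSpace H hdec) | ∃ (g : G) (i : ℕ),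
              S = profAct H hdec g '' P i}] B ∧
          μ (A ∆ B) = 0) ∧
      Summable (fun i => Real.negMulLog ((μ (P i)).toReal)) ∧
      ∑' i, Real.negMulLog ((μ (P i)).toReal) ≤ ε := by
  obtain ⟨N, hsumm, htsum⟩ := exists_summable_negMulLog_antitoneLayers_cosetCyl hfi hidx hμ hε
  refine ⟨antitoneLayers (fun n => cosetCyl hdec 1 (N + n)),
    measurableSet_antitoneLayers fun n => measurableSet_cosetCyl 1 _,
    pairwise_disjoint_antitoneLayers _, iUnion_antitoneLayers _, fun A hA => ?_, hsumm, htsum⟩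
  refine exists_measurableSet_measure_symmDiff_eq_zero_of_cosetCyl N (fun g n hn => ?_) hA
  obtain ⟨j, rfl⟩ := Nat.exists_eq_add_of_le hn
  exact ⟨_, .iUnion fun k => MeasurableSpace.measurableSet_generateFrom ⟨g, _, rfl⟩,
    cosetCyl_ae_eq_iUnion_image_antitoneLayers hfi hidx hμ g N j⟩
end
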